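/- arXiv:2107.01152 — 4 statements merged into one kernel-verified Lean document; each statement's English description precedes it below -/
import Mathlib

section
/- Let μ be a probability measure on X × Y with marginals μ_X and μ_Y, and suppose μ ≪ μ_X ⊗ μ_Y with Radon–Nikodym density r = dμ/d(μ_X ⊗ μ_Y) satisfying 0 < c ≤ r(x,y) ≤ C < ∞ for constants c, C. For each integer K ≥ 1 define I_K = E[ log( r(x, y₁) / ((1/K) · Σ_{k=1}^K r(x, y_k)) ) ], where (x, y₁) ∼ μ and y₂, …, y_K are i.i.d. ∼ μ_Y independent of (x, y₁). Then I_K → klDiv(μ, μ_X ⊗ μ_Y) as K → ∞; that is, with the optimal critic the K-sample InfoNCE bound is asymptotically tight. -/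
/-!
Write `Aₙ` for the average of the critic `r` over the positive and `n` negative samples
(`infoNCEMean`). Then `I (n + 1) = E log r - E log Aₙ`, and `E_μ log r` is the KL divergence.
Since the first marginal of `μ` is `μ_X`, `∫ r (x, y) dμ_Y(y) = 1` for a.e. `x`, so given `(x, y₁)`
the terms `r (x, yₖ) - 1` are i.i.d. and centred. Hence `E (Aₙ - 1)` and `E (Aₙ - 1)²` are
`O(1/n)`, and the sandwich `(t - 1) - (t - 1)² / c ≤ log t ≤ t - 1` for `t ≥ c` turns this into
`E log Aₙ = O(1/n)`.
-/

open MeasureTheory Real Filter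

noncomputable def klDiv {Ω : Type*} [MeasurableSpace Ω] (μ ν : Measure Ω) : ℝ :=
  ∫ ω, Real.log ((μ.rnDeriv ν ω).toReal) ∂μ

open ProbabilityTheory

lemma norm_sq_le_sq_of_abs_le {t M : ℝ} (h : |t| ≤ M) : ‖t ^ 2‖ ≤ M ^ 2 := by
  simpa [sq_abs] using pow_le_pow_left₀ (abs_nonneg t) h 2

lemma abs_integral_le_of_abs_le {α : Type*} [MeasurableSpace α] {μ : Measure α}
    [IsProbabilityMeasure μ] {f : α → ℝ} {M : ℝ} (h : ∀ a, |f a| ≤ M) : |∫ a, f a ∂μ| ≤ M := by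
  simpa using norm_integral_le_of_norm_le_const (μ := μ) (f := f) (ae_of_all _ h)

lemma abs_sum_le_card_mul {ι : Type*} [Fintype ι] {f : ι → ℝ} {B : ℝ} (hf : ∀ i, |f i| ≤ B) :
    |∑ i, f i| ≤ Fintype.card ι * B :=
  calc |∑ i, f i| ≤ ∑ i, |f i| := Finset.abs_sum_le_sum_abs _ _
    _ ≤ ∑ _i : ι, B := Finset.sum_le_sum fun i _ => hf i
    _ = Fintype.card ι * B := by simp

lemma klDiv_eq_integral_log_of_eq_withDensity {Ω : Type*} [MeasurableSpace Ω]
    {μ ν : Measure Ω} [SigmaFinite ν] {f : Ω → ℝ} (hf : Measurable f) (hf₀ : ∀ ω, 0 ≤ f ω)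
    (hμ : μ = ν.withDensity fun ω => ENNReal.ofReal (f ω)) :
    klDiv μ ν = ∫ ω, log (f ω) ∂μ := by
  subst hμ
  refine integral_congr_ae ?_
  filter_upwards [(withDensity_absolutelyContinuous ν _).ae_eq
    (Measure.rnDeriv_withDensity ν hf.ennreal_ofReal)] with ω hω
  rw [hω, ENNReal.toReal_ofReal (hf₀ ω)]

lemma ae_integral_eq_one_of_map_fst_withDensity {α β : Type*} [MeasurableSpace α]
    [MeasurableSpace β] {μ : Measure (α × β)} {ρ : Measure α} [SigmaFinite ρ] {ν : Measure β}
    [SFinite ν] {f : α × β → ℝ} (hf : Measurable f) (hf₀ : ∀ p, 0 ≤ f p)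
    (hμ : μ = (ρ.prod ν).withDensity fun p => ENNReal.ofReal (f p)) (hρ : μ.map Prod.fst = ρ) :
    ∀ᵐ x ∂ρ, ∫ y, f (x, y) ∂ν = 1 := by
  subst hμ
  have hG : ρ.withDensity (fun x => ∫⁻ y, ENNReal.ofReal (f (x, y)) ∂ν) = ρ.withDensity 1 := by
    ext s hs
    rw [withDensity_one, withDensity_apply _ hs]
    conv_rhs => rw [← hρ]
    rw [Measure.map_apply measurable_fst hs, ← Set.prod_univ, withDensity_apply _ (hs.prod .univ),
      ← Measure.prod_restrict, Measure.restrict_univ,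
      lintegral_prod _ hf.ennreal_ofReal.aemeasurable]
  filter_upwards [(withDensity_eq_iff_of_sigmaFinite
    hf.ennreal_ofReal.lintegral_prod_right'.aemeasurable aemeasurable_const).1 hG] with x hx
  rw [integral_eq_lintegral_of_nonneg_ae (ae_of_all _ fun y => hf₀ _)
    (hf.comp measurable_prodMk_left).aestronglyMeasurable, hx]
  simp

lemma sub_one_sub_sq_div_le_log {c t : ℝ} (hc : 0 < c) (hct : c ≤ t) :
    (t - 1) - (t - 1) ^ 2 / c ≤ log t := by
  have ht : 0 < t := hc.trans_le hct
  calc (t - 1) - (t - 1) ^ 2 / c ≤ (t - 1) - (t - 1) ^ 2 / t := by gcongr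
    _ = 1 - t⁻¹ := by field_simp; ring
    _ ≤ log t := one_sub_inv_le_log_of_pos ht

section LogOfBounded

variable {α : Type*} [MeasurableSpace α] {P : Measure α} [IsFiniteMeasure P] {A : α → ℝ}
  {c C : ℝ}

lemma integrable_log_of_bounded (hA : Measurable A) (hc : 0 < c) (hcA : ∀ a, c ≤ A a)
    (hAC : ∀ a, A a ≤ C) : Integrable (fun a => log (A a)) P :=
  .of_bound (Real.measurable_log.comp hA).aestronglyMeasurable (max |log c| |log C|)
    (ae_of_all _ fun a => abs_le_max_abs_abs (log_le_log hc (hcA a))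
      (log_le_log (hc.trans_le (hcA a)) (hAC a)))

lemma abs_integral_log_le (hA : Measurable A) (hc : 0 < c) (hcA : ∀ a, c ≤ A a)
    (hAC : ∀ a, A a ≤ C) :
    |∫ a, log (A a) ∂P| ≤ |∫ a, (A a - 1) ∂P| + (∫ a, (A a - 1) ^ 2 ∂P) / c := by
  have hbdd : ∀ a, |A a - 1| ≤ C + 1 := fun a =>
    abs_le.2 ⟨by linarith [hcA a, hAC a], by linarith [hAC a]⟩
  have int₁ : Integrable (fun a => A a - 1) P :=
    .of_bound (hA.sub_const 1).aestronglyMeasurable _ (ae_of_all _ hbdd)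
  have int₂ : Integrable (fun a => (A a - 1) ^ 2) P :=
    .of_bound ((hA.sub_const 1).pow_const 2).aestronglyMeasurable ((C + 1) ^ 2)
      (ae_of_all _ fun a => norm_sq_le_sq_of_abs_le (hbdd a))
  have intLog := integrable_log_of_bounded (P := P) hA hc hcA hAC
  have upper : ∫ a, log (A a) ∂P ≤ ∫ a, (A a - 1) ∂P :=
    integral_mono intLog int₁ fun a => log_le_sub_one_of_pos (hc.trans_le (hcA a))
  have lower : ∫ a, (A a - 1) ∂P - (∫ a, (A a - 1) ^ 2 ∂P) / c ≤ ∫ a, log (A a) ∂P := by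
    rw [← integral_div, ← integral_sub int₁ (int₂.div_const c)]
    exact integral_mono (int₁.sub (int₂.div_const c)) intLog
      fun a => sub_one_sub_sq_div_le_log hc (hcA a)
  have hsq : 0 ≤ (∫ a, (A a - 1) ^ 2 ∂P) / c :=
    div_nonneg (integral_nonneg fun a => sq_nonneg _) hc.le
  rw [abs_le]
  constructor <;> linarith [neg_abs_le (∫ a, (A a - 1) ∂P), le_abs_self (∫ a, (A a - 1) ∂P)]

end LogOfBounded

section SumOfIID

variable {β ι : Type*} [MeasurableSpace β] [Fintype ι] {ν : Measure β} [IsProbabilityMeasure ν]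
  {g : β → ℝ}

lemma integral_pi_sum_comp_eval (hg : Integrable g ν) :
    ∫ ω, ∑ i : ι, g (ω i) ∂(Measure.pi fun _ => ν) = Fintype.card ι * ∫ y, g y ∂ν := by
  rw [integral_finsetSum _ fun i _ => integrable_comp_eval hg]
  simp [integral_comp_eval (μ := fun _ => ν) hg.aestronglyMeasurable]

lemma integral_sq_pi_sum_comp_eval (hg : MemLp g 2 ν) (hg₀ : ∫ y, g y ∂ν = 0) :
    ∫ ω, (∑ i : ι, g (ω i)) ^ 2 ∂(Measure.pi fun _ => ν) = Fintype.card ι * ∫ y, g y ^ 2 ∂ν := by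
  have hvar := variance_sum_pi (μ := fun _ : ι => ν) (X := fun _ => g) fun _ => hg
  rw [variance_of_integral_eq_zero hg.aestronglyMeasurable.aemeasurable hg₀] at hvar
  have hsum : AEMeasurable (∑ i : ι, fun ω : ι → β => g (ω i)) (Measure.pi fun _ => ν) :=
    Finset.aemeasurable_sum _ fun i _ =>
      (integrable_comp_eval (μ := fun _ => ν) (hg.integrable one_le_two)).aemeasurable
  rw [variance_of_integral_eq_zero hsum] at hvar
  · simpa using hvar
  · simp [Finset.sum_apply, integral_pi_sum_comp_eval (hg.integrable one_le_two), hg₀]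

end SumOfIID

section ConditionallyIID

variable {α β ι : Type*} [MeasurableSpace α] [MeasurableSpace β] [Fintype ι]
  {μ : Measure α} [IsFiniteMeasure μ] {ν : Measure β} [IsProbabilityMeasure ν]
  {h : α → β → ℝ} {B : ℝ}

lemma measurable_prod_pi_sum (hh : Measurable (Function.uncurry h)) :
    Measurable fun p : α × (ι → β) => ∑ i, h p.1 (p.2 i) :=
  Finset.measurable_sum _ fun i _ =>
    hh.comp (measurable_fst.prodMk ((measurable_pi_apply i).comp measurable_snd))

lemma integral_prod_pi_sum_eq_zero (hh : Measurable (Function.uncurry h))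
    (hB : ∀ a b, |h a b| ≤ B) (h₀ : ∀ᵐ a ∂μ, ∫ b, h a b ∂ν = 0) :
    ∫ p, ∑ i : ι, h p.1 (p.2 i) ∂(μ.prod (Measure.pi fun _ => ν)) = 0 := by
  rw [integral_prod _ (.of_bound (measurable_prod_pi_sum hh).aestronglyMeasurable _
    (ae_of_all _ fun p => abs_sum_le_card_mul fun i => hB p.1 (p.2 i)))]
  refine integral_eq_zero_of_ae ?_
  filter_upwards [h₀] with a ha
  have hmeas : Measurable (h a) := hh.comp measurable_prodMk_left
  rw [integral_pi_sum_comp_eval (.of_bound hmeas.aestronglyMeasurable B (ae_of_all _ (hB a))),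
    ha, mul_zero, Pi.zero_apply]

lemma integral_prod_pi_sum_sq_le [IsProbabilityMeasure μ] (hh : Measurable (Function.uncurry h))
    (hB : ∀ a b, |h a b| ≤ B) (h₀ : ∀ᵐ a ∂μ, ∫ b, h a b ∂ν = 0) :
    ∫ p, (∑ i : ι, h p.1 (p.2 i)) ^ 2 ∂(μ.prod (Measure.pi fun _ => ν)) ≤
      Fintype.card ι * B ^ 2 := by
  have hint : Integrable (fun p : α × (ι → β) => (∑ i : ι, h p.1 (p.2 i)) ^ 2)
      (μ.prod (Measure.pi fun _ => ν)) :=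
    .of_bound ((measurable_prod_pi_sum hh).pow_const 2).aestronglyMeasurable
      ((Fintype.card ι * B) ^ 2) (ae_of_all _ fun p =>
        norm_sq_le_sq_of_abs_le (abs_sum_le_card_mul fun i => hB p.1 (p.2 i)))
  rw [integral_prod _ hint]
  calc ∫ a, ∫ ω, (∑ i : ι, h a (ω i)) ^ 2 ∂(Measure.pi fun _ => ν) ∂μ
      ≤ ∫ _a, Fintype.card ι * B ^ 2 ∂μ := by
        refine integral_mono_ae hint.integral_prod_left (integrable_const _) ?_
        filter_upwards [h₀] with a ha
        have hmeas : AEStronglyMeasurable (h a) ν :=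
          (hh.comp measurable_prodMk_left).aestronglyMeasurable
        rw [integral_sq_pi_sum_comp_eval (.of_bound hmeas B (ae_of_all _ (hB a))) ha]
        gcongr
        exact (le_abs_self _).trans
          (abs_integral_le_of_abs_le fun b => norm_sq_le_sq_of_abs_le (hB a b))
    _ = Fintype.card ι * B ^ 2 := by simp

end ConditionallyIID

section InfoNCE

variable {X Y : Type*}

noncomputable def infoNCEMean (r : X × Y → ℝ) (n : ℕ) (p : (X × Y) × (Fin n → Y)) : ℝ :=
  (r p.1 + ∑ k, r (p.1.1, p.2 k)) / (n + 1)

variable {r : X × Y → ℝ} {c C : ℝ} {n : ℕ}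

lemma measurable_infoNCEMean [MeasurableSpace X] [MeasurableSpace Y] (hr : Measurable r) :
    Measurable (infoNCEMean r n) := by
  unfold infoNCEMean
  fun_prop

lemma le_infoNCEMean (hrc : ∀ p, c ≤ r p) (p : (X × Y) × (Fin n → Y)) :
    c ≤ infoNCEMean r n p := by
  have hsum : n * c ≤ ∑ k, r (p.1.1, p.2 k) := by
    simpa using Finset.card_nsmul_le_sum Finset.univ _ c fun k _ => hrc (p.1.1, p.2 k)
  rw [infoNCEMean, le_div_iff₀ (by positivity)]
  linarith [hrc p.1]

lemma infoNCEMean_le (hrC : ∀ p, r p ≤ C) (p : (X × Y) × (Fin n → Y)) :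
    infoNCEMean r n p ≤ C := by
  have hsum : ∑ k, r (p.1.1, p.2 k) ≤ n * C := by
    simpa using Finset.sum_le_card_nsmul Finset.univ _ C fun k _ => hrC (p.1.1, p.2 k)
  rw [infoNCEMean, div_le_iff₀ (by positivity)]
  linarith [hrC p.1]

lemma infoNCEMean_sub_one (p : (X × Y) × (Fin n → Y)) :
    infoNCEMean r n p - 1 = ((r p.1 - 1) + ∑ k, (r (p.1.1, p.2 k) - 1)) / (n + 1) := by
  rw [infoNCEMean, Finset.sum_sub_distrib]
  field_simp
  simp
  ring

end InfoNCE

section Moments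

variable {X Y : Type*} [MeasurableSpace X] [MeasurableSpace Y] {μ : Measure (X × Y)}
  {ν : Measure Y} [IsProbabilityMeasure ν] {r : X × Y → ℝ} {B : ℝ}
  {n : ℕ}

lemma ae_integral_sub_one_eq_zero (hr : Measurable r) (hB : ∀ p, |r p - 1| ≤ B)
    (hν : ∀ᵐ q ∂μ, ∫ y, r (q.1, y) ∂ν = 1) :
    ∀ᵐ q ∂μ, ∫ y, (r (q.1, y) - 1) ∂ν = 0 := by
  filter_upwards [hν] with q hq
  have hint : Integrable (fun y => r (q.1, y) - 1) ν :=
    .of_bound ((hr.comp measurable_prodMk_left).sub_const 1).aestronglyMeasurable B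
      (ae_of_all _ fun y => hB _)
  have hsplit := integral_add hint (integrable_const (1 : ℝ))
  simp only [sub_add_cancel, hq, integral_const, probReal_univ, one_smul] at hsplit
  linarith

variable [IsProbabilityMeasure μ]

lemma integral_infoNCEMean_sub_one (hr : Measurable r) (hB : ∀ p, |r p - 1| ≤ B)
    (hν : ∀ᵐ q ∂μ, ∫ y, r (q.1, y) ∂ν = 1) :
    ∫ p, (infoNCEMean r n p - 1) ∂(μ.prod (Measure.pi fun _ => ν)) =
      (∫ q, (r q - 1) ∂μ) / (n + 1) := by
  have hh : Measurable (Function.uncurry fun (q : X × Y) (y : Y) => r (q.1, y) - 1) := by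
    fun_prop
  simp_rw [infoNCEMean_sub_one]
  rw [integral_div, integral_add, integral_fun_fst (f := fun q => r q - 1),
    integral_prod_pi_sum_eq_zero hh (fun q y => hB (q.1, y))
      (ae_integral_sub_one_eq_zero hr hB hν)]
  · simp
  · exact .of_bound ((hr.comp measurable_fst).sub_const 1).aestronglyMeasurable _
      (ae_of_all _ fun p => hB p.1)
  · exact .of_bound (measurable_prod_pi_sum hh).aestronglyMeasurable _
      (ae_of_all _ fun p => abs_sum_le_card_mul fun k => hB (p.1.1, p.2 k))

lemma integral_sq_infoNCEMean_sub_one_le (hr : Measurable r) (hB : ∀ p, |r p - 1| ≤ B)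
    (hν : ∀ᵐ q ∂μ, ∫ y, r (q.1, y) ∂ν = 1) :
    ∫ p, (infoNCEMean r n p - 1) ^ 2 ∂(μ.prod (Measure.pi fun _ => ν)) ≤
      2 * B ^ 2 / (n + 1) := by
  have hh : Measurable (Function.uncurry fun (q : X × Y) (y : Y) => r (q.1, y) - 1) := by
    fun_prop
  have intW : Integrable (fun p : (X × Y) × (Fin n → Y) => (r p.1 - 1) ^ 2)
      (μ.prod (Measure.pi fun _ => ν)) :=
    .of_bound (((hr.comp measurable_fst).sub_const 1).pow_const 2).aestronglyMeasurable _
      (ae_of_all _ fun p => norm_sq_le_sq_of_abs_le (hB p.1))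
  have intS : Integrable (fun p : (X × Y) × (Fin n → Y) => (∑ k, (r (p.1.1, p.2 k) - 1)) ^ 2)
      (μ.prod (Measure.pi fun _ => ν)) :=
    .of_bound ((measurable_prod_pi_sum hh).pow_const 2).aestronglyMeasurable _
      (ae_of_all _ fun p =>
        norm_sq_le_sq_of_abs_le (abs_sum_le_card_mul fun k => hB (p.1.1, p.2 k)))
  have hW : ∫ p, (r p.1 - 1) ^ 2 ∂(μ.prod (Measure.pi fun _ : Fin n => ν)) ≤ B ^ 2 := by
    rw [integral_fun_fst (f := fun q => (r q - 1) ^ 2), probReal_univ, one_smul]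
    exact (le_abs_self _).trans (abs_integral_le_of_abs_le fun q => norm_sq_le_sq_of_abs_le (hB q))
  have hS := integral_prod_pi_sum_sq_le (ι := Fin n) hh (fun q y => hB (q.1, y))
    (ae_integral_sub_one_eq_zero hr hB hν)
  simp_rw [infoNCEMean_sub_one]
  calc ∫ p, (((r p.1 - 1) + ∑ k, (r (p.1.1, p.2 k) - 1)) / (n + 1)) ^ 2
        ∂(μ.prod (Measure.pi fun _ => ν))
      ≤ ∫ p, 2 * ((r p.1 - 1) ^ 2 + (∑ k, (r (p.1.1, p.2 k) - 1)) ^ 2) / (n + 1) ^ 2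
        ∂(μ.prod (Measure.pi fun _ => ν)) :=
        integral_mono_of_nonneg (ae_of_all _ fun p => sq_nonneg _)
          (((intW.add intS).const_mul 2).div_const _)
          (ae_of_all _ fun p => by simp only [div_pow]; gcongr; exact add_sq_le)
    _ = 2 * (∫ p, (r p.1 - 1) ^ 2 ∂(μ.prod (Measure.pi fun _ => ν)) +
          ∫ p, (∑ k, (r (p.1.1, p.2 k) - 1)) ^ 2 ∂(μ.prod (Measure.pi fun _ => ν))) /
          (n + 1) ^ 2 := by
        rw [integral_div, integral_const_mul, integral_add intW intS]
    _ ≤ 2 * (B ^ 2 + n * B ^ 2) / (n + 1) ^ 2 := by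
        gcongr
        simpa using hS
    _ = 2 * B ^ 2 / (n + 1) := by
        field_simp
        ring

lemma abs_integral_log_infoNCEMean_le (hr : Measurable r) {c C : ℝ} (hc : 0 < c)
    (hrc : ∀ p, c ≤ r p) (hrC : ∀ p, r p ≤ C) (hB : ∀ p, |r p - 1| ≤ B)
    (hν : ∀ᵐ q ∂μ, ∫ y, r (q.1, y) ∂ν = 1) :
    |∫ p, log (infoNCEMean r n p) ∂(μ.prod (Measure.pi fun _ => ν))| ≤
      (B + 2 * B ^ 2 / c) / (n + 1) :=
  calc |∫ p, log (infoNCEMean r n p) ∂(μ.prod (Measure.pi fun _ => ν))|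
      ≤ |∫ p, (infoNCEMean r n p - 1) ∂(μ.prod (Measure.pi fun _ => ν))| +
          (∫ p, (infoNCEMean r n p - 1) ^ 2 ∂(μ.prod (Measure.pi fun _ => ν))) / c :=
        abs_integral_log_le (measurable_infoNCEMean hr) hc (le_infoNCEMean hrc)
          (infoNCEMean_le hrC)
    _ ≤ B / (n + 1) + 2 * B ^ 2 / (n + 1) / c := by
        have hmean : |∫ q, (r q - 1) ∂μ| ≤ B := abs_integral_le_of_abs_le hB
        rw [integral_infoNCEMean_sub_one hr hB hν, abs_div,
          abs_of_pos (n.cast_add_one_pos (α := ℝ))]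
        exact add_le_add (div_le_div_of_nonneg_right hmean n.cast_add_one_pos.le)
          (div_le_div_of_nonneg_right (integral_sq_infoNCEMean_sub_one_le hr hB hν) hc.le)
    _ = (B + 2 * B ^ 2 / c) / (n + 1) := by ring

lemma integral_log_div_infoNCEMean (hr : Measurable r) {c C : ℝ} (hc : 0 < c)
    (hrc : ∀ p, c ≤ r p) (hrC : ∀ p, r p ≤ C) :
    ∫ p, log (r p.1 / infoNCEMean r n p) ∂(μ.prod (Measure.pi fun _ => ν)) =
      ∫ q, log (r q) ∂μ - ∫ p, log (infoNCEMean r n p) ∂(μ.prod (Measure.pi fun _ => ν)) := by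
  have hlog : ∀ p, log (r p.1 / infoNCEMean r n p) = log (r p.1) - log (infoNCEMean r n p) :=
    fun p => log_div (hc.trans_le (hrc p.1)).ne' (hc.trans_le (le_infoNCEMean hrc p)).ne'
  have hint : Integrable (fun p : (X × Y) × (Fin n → Y) => log (r p.1))
      (μ.prod (Measure.pi fun _ => ν)) :=
    integrable_log_of_bounded (hr.comp measurable_fst) hc (fun p => hrc p.1) fun p => hrC p.1
  simp_rw [hlog]
  rw [integral_sub hint (integrable_log_of_bounded (measurable_infoNCEMean hr) hc
    (le_infoNCEMean hrc) (infoNCEMean_le hrC)), integral_fun_fst (f := fun q => log (r q))]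
  simp

end Moments

/-- **Asymptotic tightness of InfoNCE with the optimal critic.**
Let `μ` be a probability measure on `X × Y` with marginals `μ_X, μ_Y`, absolutely continuous
with respect to `μ_X ⊗ μ_Y` with density `r = dμ/d(μ_X ⊗ μ_Y)` satisfying
`0 < c ≤ r ≤ C < ∞`.  For each `K ≥ 1` let
`I K = E[ log ( r(x, y₁) / ((1/K) Σ_{k=1}^K r(x, y_k)) ) ]`, where `(x, y₁) ∼ μ` and
`y₂, …, y_K` are i.i.d. `μ_Y`, independent of `(x, y₁)`.  Then `I K → klDiv(μ, μ_X ⊗ μ_Y)`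
as `K → ∞`. -/
theorem infoNCE_optimal_critic_tendsto_klDiv {X Y : Type*} [MeasurableSpace X]
    [MeasurableSpace Y] (μ : Measure (X × Y)) [IsProbabilityMeasure μ]
    (r : X × Y → ℝ) (hr : Measurable r) (c C : ℝ) (hc : 0 < c)
    (hrc : ∀ p, c ≤ r p) (hrC : ∀ p, r p ≤ C)
    (hdens : μ = ((μ.map Prod.fst).prod (μ.map Prod.snd)).withDensity
      (fun p => ENNReal.ofReal (r p)))
    (I : ℕ → ℝ)
    (hI : ∀ K, 1 ≤ K → I K =
      ∫ p : (X × Y) × (Fin (K - 1) → Y),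
        Real.log (r p.1 / ((1 / (K : ℝ)) * (r p.1 + ∑ k, r (p.1.1, p.2 k))))
        ∂(μ.prod (Measure.pi fun _ : Fin (K - 1) => μ.map Prod.snd))) :
    Tendsto I atTop (nhds (klDiv μ ((μ.map Prod.fst).prod (μ.map Prod.snd)))) := by
  have : IsProbabilityMeasure (μ.map Prod.snd) :=
    Measure.isProbabilityMeasure_map measurable_snd.aemeasurable
  have hr₀ : ∀ p, 0 ≤ r p := fun p => hc.le.trans (hrc p)
  have hν : ∀ᵐ q ∂μ, ∫ y, r (q.1, y) ∂(μ.map Prod.snd) = 1 :=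
    ae_of_ae_map measurable_fst.aemeasurable
      (ae_integral_eq_one_of_map_fst_withDensity hr hr₀ hdens rfl)
  obtain ⟨B, hB⟩ : ∃ B, ∀ p, |r p - 1| ≤ B :=
    ⟨_, fun p => abs_le_max_abs_abs (sub_le_sub_right (hrc p) 1) (sub_le_sub_right (hrC p) 1)⟩
  have hgap : ∀ n : ℕ, |I (n + 1) - klDiv μ ((μ.map Prod.fst).prod (μ.map Prod.snd))| ≤
      (B + 2 * B ^ 2 / c) / (n + 1) := fun n => by
    have hIn : I (n + 1) = ∫ p : (X × Y) × (Fin n → Y), log (r p.1 / infoNCEMean r n p)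
        ∂(μ.prod (Measure.pi fun _ => μ.map Prod.snd)) := by
      rw [hI (n + 1) n.succ_pos]
      simp [infoNCEMean, div_eq_inv_mul]
    rw [hIn, integral_log_div_infoNCEMean hr hc hrc hrC,
      ← klDiv_eq_integral_log_of_eq_withDensity hr hr₀ hdens, sub_sub_cancel_left, abs_neg]
    exact abs_integral_log_infoNCEMean_le hr hc hrc hrC hB hν
  rw [← tendsto_add_atTop_iff_nat 1, tendsto_iff_norm_sub_tendsto_zero]
  refine squeeze_zero (fun _ => norm_nonneg _) hgap ?_
  simpa [Function.comp_def] using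
    (tendsto_const_div_atTop_nhds_zero_nat (B + 2 * B ^ 2 / c)).comp (tendsto_add_atTop_nat 1)
end

section
/- Let E be a real normed vector space, K ≥ 1, and let g₀, g₁, …, g_K : E → ℝ be differentiable at a point θ₀ ∈ E. Define S(θ) = Σ_{j=0}^K exp(g_j(θ) − g₀(θ)) (so S(θ) > 0 for all θ, and the j = 0 term is identically 1). Then the Fréchet derivative at θ₀ of the FlatNCE⊕ objective θ ↦ S(θ)/S(θ₀) (the denominator being 'detached', i.e. frozen at the value S(θ₀)) equals the Fréchet derivative at θ₀ of the InfoNCE loss θ ↦ log S(θ). -/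
open Real

/-- **FlatNCE⊕ has the same gradient as InfoNCE.**
Let `g₀, …, g_K : E → ℝ` be differentiable at `θ₀` (index `0` is the positive sample) and
`S(θ) = Σ_{j=0}^K exp(g_j(θ) − g₀(θ))`.  The Fréchet derivative at `θ₀` of the FlatNCE⊕
objective `θ ↦ S(θ)/S(θ₀)` (denominator detached, i.e. frozen at `S(θ₀)`) equals the
Fréchet derivative at `θ₀` of the InfoNCE loss `θ ↦ log S(θ)`. -/
theorem flatNCEplus_fderiv_eq_infoNCE_fderiv {E : Type*} [NormedAddCommGroup E]
    [NormedSpace ℝ E] (K : ℕ) (hK : 1 ≤ K) (g : Fin (K + 1) → E → ℝ) (θ₀ : E)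
    (hg : ∀ j, DifferentiableAt ℝ (g j) θ₀) :
    fderiv ℝ (fun θ => (∑ j, Real.exp (g j θ - g 0 θ)) /
        (∑ j, Real.exp (g j θ₀ - g 0 θ₀))) θ₀
      = fderiv ℝ (fun θ => Real.log (∑ j, Real.exp (g j θ - g 0 θ))) θ₀ := by
  set S : E → ℝ := fun θ => ∑ j, Real.exp (g j θ - g 0 θ) with hSdef
  have hS : DifferentiableAt ℝ S θ₀ :=
    DifferentiableAt.fun_sum fun j _ => ((hg j).sub (hg 0)).exp
  have hpos : 0 < S θ₀ :=
    Finset.sum_pos (fun j _ => Real.exp_pos _) ⟨0, Finset.mem_univ _⟩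
  have h1 : fderiv ℝ (fun θ => S θ / S θ₀) θ₀ = (S θ₀)⁻¹ • fderiv ℝ S θ₀ := by
    simp only [div_eq_inv_mul]
    rw [fderiv_const_mul hS]
  have h2 : fderiv ℝ (fun θ => Real.log (S θ)) θ₀ = (S θ₀)⁻¹ • fderiv ℝ S θ₀ :=
    (hS.hasFDerivAt.log hpos.ne').fderiv
  rw [h1, h2]
end

section
/- Let E be a real normed vector space, K ≥ 1, and let g₀, g₁, …, g_K : E → ℝ be differentiable at θ ∈ E. Then the Fréchet derivative at θ of the FlatNCE loss L(θ') = log( Σ_{j=1}^K exp(g_j(θ') − g₀(θ')) ) is the self-normalized importance-weighted combination D L(θ) = Σ_{j=1}^K w_j · D g_j(θ) − D g₀(θ), where w_j = exp(g_j(θ)) / ( Σ_{j'=1}^K exp(g_{j'}(θ)) ) are the softmax weights over the negative logits. -/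
/-! The FlatNCE loss is the log-sum-exp of the differences `g_j - g₀`. The derivative of
log-sum-exp is the softmax-weighted average of the derivatives, and softmax is invariant under
subtracting the common term `g₀ θ`; since the weights sum to one, the `g₀` terms collapse to
`- D g₀(θ)`. -/

open Real Finset

section Softmax

variable {ι : Type*} [Fintype ι]

noncomputable def softmax (a : ι → ℝ) (i : ι) : ℝ := exp (a i) / ∑ j, exp (a j)

theorem softmax_sub_const (a : ι → ℝ) (c : ℝ) : softmax (fun i => a i - c) = softmax a := by
  funext i
  simp only [softmax, exp_sub, ← sum_div]
  exact div_div_div_cancel_right₀ (exp_pos c).ne' _ _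

theorem sum_exp_pos [Nonempty ι] (a : ι → ℝ) : 0 < ∑ i, exp (a i) :=
  sum_pos (fun i _ => exp_pos (a i)) univ_nonempty

theorem sum_softmax [Nonempty ι] (a : ι → ℝ) : ∑ i, softmax a i = 1 := by
  simp only [softmax, ← sum_div]
  exact div_self (sum_exp_pos a).ne'

theorem HasFDerivAt.log_sum_exp [Nonempty ι] {E : Type*} [NormedAddCommGroup E]
    [NormedSpace ℝ E] {f : ι → E → ℝ} {f' : ι → E →L[ℝ] ℝ} {x : E}
    (hf : ∀ i, HasFDerivAt (f i) (f' i) x) :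
    HasFDerivAt (fun y => Real.log (∑ i, Real.exp (f i y)))
      (∑ i, softmax (fun i => f i x) i • f' i) x := by
  have hsum := HasFDerivAt.fun_sum (u := univ) fun i _ => (hf i).exp
  convert hsum.log (sum_exp_pos fun i => f i x).ne' using 1
  simp only [softmax, smul_sum, smul_smul, div_eq_inv_mul]

end Softmax

/-- **The FlatNCE gradient is a self-normalized importance-weighted estimator.**
Let `g₀ : E → ℝ` be the positive logit and `g₁, …, g_K : E → ℝ` the negative logits, all
differentiable at `θ`.  The Fréchet derivative at `θ` of the FlatNCE loss
`L(θ') = log ( Σ_{j=1}^K exp(g_j(θ') − g₀(θ')) )` is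
`Σ_{j=1}^K w_j • D g_j(θ) − D g₀(θ)` with softmax weights
`w_j = exp(g_j(θ)) / Σ_{j'} exp(g_{j'}(θ))`. -/
theorem flatNCE_fderiv_importance_weighted {E : Type*} [NormedAddCommGroup E]
    [NormedSpace ℝ E] (K : ℕ) (hK : 1 ≤ K) (g₀ : E → ℝ) (g : Fin K → E → ℝ) (θ : E)
    (hg₀ : DifferentiableAt ℝ g₀ θ) (hg : ∀ j, DifferentiableAt ℝ (g j) θ)
    (w : Fin K → ℝ)
    (hw : ∀ j, w j = Real.exp (g j θ) / ∑ j', Real.exp (g j' θ)) :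
    fderiv ℝ (fun θ' => Real.log (∑ j, Real.exp (g j θ' - g₀ θ'))) θ
      = (∑ j, w j • fderiv ℝ (g j) θ) - fderiv ℝ g₀ θ := by
  have : Nonempty (Fin K) := ⟨⟨0, hK⟩⟩
  have hw_softmax : w = softmax fun j => g j θ := funext hw
  have hL := HasFDerivAt.log_sum_exp fun j => (hg j).hasFDerivAt.fun_sub hg₀.hasFDerivAt
  rw [hL.fderiv, softmax_sub_const (fun j => g j θ), ← hw_softmax]
  simp only [smul_sub, sum_sub_distrib, ← sum_smul, hw_softmax, sum_softmax, one_smul]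
end

section
/- (Hölder-FlatNCE gradient identity.) Let E be a real normed vector space, γ ≠ 0 a real number, n ≥ 1, and let g₁, …, g_n : E → ℝ be differentiable at θ ∈ E. Define the Hölder mean m_γ(θ) = ( (1/n) Σ_{j=1}^n exp(g_j(θ))^γ )^{1/γ}. Then the Fréchet derivative at θ of θ' ↦ log m_γ(θ') equals (1/γ) times the Fréchet derivative at θ of θ' ↦ log( Σ_{j=1}^n exp(γ · g_j(θ')) ), and this common derivative is the tempered softmax combination Σ_{j=1}^n v_j · D g_j(θ) with v_j = exp(γ g_j(θ)) / Σ_{j'=1}^n exp(γ g_{j'}(θ)). In particular, the gradient of the Hölder-FlatNCE objective with exponent γ equals 1/γ times the gradient of the FlatNCE objective evaluated at the annealed critic γ·g. -/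
open Real

/-- **Hölder-FlatNCE gradient identity.**
For `γ ≠ 0`, `n ≥ 1`, and `g₁, …, g_n : E → ℝ` differentiable at `θ`, with Hölder mean
`m_γ(θ') = ((1/n) Σ_j exp(g_j(θ'))^γ)^{1/γ}`, the Fréchet derivative at `θ` of
`θ' ↦ log m_γ(θ')` equals `(1/γ)` times the Fréchet derivative at `θ` of
`θ' ↦ log ( Σ_j exp(γ · g_j(θ')) )`, and this common derivative is the tempered softmax
combination `Σ_j v_j • D g_j(θ)` with
`v_j = exp(γ g_j(θ)) / Σ_{j'} exp(γ g_{j'}(θ))`. -/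
theorem holder_flatNCE_gradient {E : Type*} [NormedAddCommGroup E] [NormedSpace ℝ E]
    (γ : ℝ) (hγ : γ ≠ 0) (n : ℕ) (hn : 1 ≤ n) (g : Fin n → E → ℝ) (θ : E)
    (hg : ∀ j, DifferentiableAt ℝ (g j) θ) (v : Fin n → ℝ)
    (hv : ∀ j, v j = Real.exp (γ * g j θ) / ∑ j', Real.exp (γ * g j' θ)) :
    fderiv ℝ (fun θ' => Real.log (((1 / (n : ℝ)) * ∑ j, (Real.exp (g j θ')) ^ γ) ^ (1 / γ))) θ
        = (1 / γ) • fderiv ℝ (fun θ' => Real.log (∑ j, Real.exp (γ * g j θ'))) θ ∧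
    fderiv ℝ (fun θ' => Real.log (((1 / (n : ℝ)) * ∑ j, (Real.exp (g j θ')) ^ γ) ^ (1 / γ))) θ
        = ∑ j, v j • fderiv ℝ (g j) θ := by
  have hnp : (0 : ℝ) < n := by exact_mod_cast hn
  have hne : (Finset.univ : Finset (Fin n)).Nonempty := by
    have : Nonempty (Fin n) := Fin.pos_iff_nonempty.mp hn
    exact Finset.univ_nonempty
  have hSpos : ∀ θ' : E, 0 < ∑ j, Real.exp (γ * g j θ') := fun θ' =>
    Finset.sum_pos (fun j _ => Real.exp_pos _) hne
  set S : E → ℝ := fun θ' => ∑ j, Real.exp (γ * g j θ') with hSdef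
  -- rewrite the Hölder-mean function
  have hfun : (fun θ' => Real.log (((1 / (n : ℝ)) * ∑ j, (Real.exp (g j θ')) ^ γ) ^ (1 / γ)))
      = fun θ' => (1 / γ) * (Real.log (1 / (n : ℝ)) + Real.log (S θ')) := by
    funext θ'
    have h1 : (∑ j, (Real.exp (g j θ')) ^ γ) = S θ' := by
      simp only [hSdef]
      refine Finset.sum_congr rfl fun j _ => ?_
      rw [← Real.exp_mul, mul_comm]
    rw [h1]
    have hprod : 0 < (1 / (n : ℝ)) * S θ' := by
      have := hSpos θ'
      positivity
    rw [Real.log_rpow hprod, Real.log_mul (by positivity) (ne_of_gt (hSpos θ'))]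
  -- differentiability facts
  have hDterm : ∀ j : Fin n, DifferentiableAt ℝ (fun θ' => Real.exp (γ * g j θ')) θ :=
    fun j => ((hg j).const_mul γ).exp
  have hDS : DifferentiableAt ℝ S θ := DifferentiableAt.fun_sum fun j _ => hDterm j
  have hDlogS : DifferentiableAt ℝ (fun θ' => Real.log (S θ')) θ :=
    hDS.log (ne_of_gt (hSpos θ))
  -- derivative of each exp term
  have hfd : ∀ j : Fin n, fderiv ℝ (fun θ' => Real.exp (γ * g j θ')) θ
      = (Real.exp (γ * g j θ) * γ) • fderiv ℝ (g j) θ := by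
    intro j
    rw [fderiv_exp ((hg j).const_mul γ), fderiv_const_mul (hg j) γ, smul_smul]
  have hfdS : fderiv ℝ S θ = ∑ j, (Real.exp (γ * g j θ) * γ) • fderiv ℝ (g j) θ := by
    rw [hSdef]
    rw [fderiv_fun_sum fun j _ => hDterm j]
    exact Finset.sum_congr rfl fun j _ => hfd j
  have hfdlogS : fderiv ℝ (fun θ' => Real.log (S θ')) θ = (S θ)⁻¹ • fderiv ℝ S θ :=
    fderiv.log hDS (ne_of_gt (hSpos θ))
  -- derivative of the Hölder-mean log
  have hmain : fderiv ℝ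
      (fun θ' => Real.log (((1 / (n : ℝ)) * ∑ j, (Real.exp (g j θ')) ^ γ) ^ (1 / γ))) θ
      = (1 / γ) • fderiv ℝ (fun θ' => Real.log (S θ')) θ := by
    rw [hfun]
    have hD : DifferentiableAt ℝ (fun θ' => Real.log (1 / (n : ℝ)) + Real.log (S θ')) θ :=
      (differentiableAt_const _).add hDlogS
    rw [fderiv_const_mul hD (1 / γ)]
    congr 1
    rw [fderiv_const_add]
  refine ⟨hmain, ?_⟩
  rw [hmain, hfdlogS, hfdS, Finset.smul_sum, Finset.smul_sum]
  refine Finset.sum_congr rfl fun j _ => ?_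
  rw [smul_smul, smul_smul, hv j]
  congr 1
  have hS0 : S θ ≠ 0 := ne_of_gt (hSpos θ)
  field_simp
  ring
end
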